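/- arXiv:2509.12342 — 2 statements merged into one kernel-verified Lean document; each statement's English description precedes it below -/
import Mathlib

section
/- Let H_1 and H_2 be regular graphs that are A-cospectral (so in particular they have the same number of vertices and the same degree of regularity), and let H be a regular graph. Then the T-edge neighbourhood coronas H_1 ⊟_T H and H_2 ⊟_T H are A-cospectral, and the T-edge neighbourhood coronas H ⊟_T H_1 and H ⊟_T H_2 are A-cospectral. -/
open Finset Matrix Polynomial

/-- The vertex-edge incidence matrix `R(G)` of a graph `G`: rows indexed by vertices,
columns indexed by edges, with entry `1` exactly when the vertex is incident with the edge. -/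
def incMat {V : Type*} [DecidableEq V] (G : SimpleGraph V) : Matrix V G.edgeSet ℝ :=
  Matrix.of fun v e => if v ∈ (e : Sym2 V) then (1 : ℝ) else 0

/-- The `M`-coronal `Γ_M(x)`: the sum of all entries of `(xI - M)⁻¹`. -/
noncomputable def coronal {n : Type*} [Fintype n] [DecidableEq n]
    (M : Matrix n n ℝ) (x : ℝ) : ℝ :=
  ∑ i, ∑ j, (x • (1 : Matrix n n ℝ) - M)⁻¹ i j

/-- The T-vertex neighbourhood corona `G₁ ⊡_T G₂`: the disjoint union of the T-graph
`T(G₁)` (on `V₁ ⊕ E(G₁)`) and one copy of `G₂` for each vertex of `G₁`, where every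
vertex of the `i`-th copy of `G₂` is joined to every neighbour of `vᵢ` in `T(G₁)`,
i.e. to every vertex of `G₁` adjacent to `vᵢ` and to every edge of `G₁` incident with `vᵢ`. -/
def tVertexCorona {V₁ V₂ : Type*} (G₁ : SimpleGraph V₁) (G₂ : SimpleGraph V₂) :
    SimpleGraph (V₁ ⊕ (G₁.edgeSet ⊕ V₁ × V₂)) :=
  SimpleGraph.fromRel fun a b =>
    match a, b with
    | Sum.inl u, Sum.inl v => G₁.Adj u v
    | Sum.inl u, Sum.inr (Sum.inl e) => u ∈ (e : Sym2 V₁)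
    | Sum.inl u, Sum.inr (Sum.inr iw) => G₁.Adj u iw.1
    | Sum.inr (Sum.inl e), Sum.inr (Sum.inl f) => ∃ v, v ∈ (e : Sym2 V₁) ∧ v ∈ (f : Sym2 V₁)
    | Sum.inr (Sum.inl e), Sum.inr (Sum.inr iw) => iw.1 ∈ (e : Sym2 V₁)
    | Sum.inr (Sum.inr iw), Sum.inr (Sum.inr jw) => iw.1 = jw.1 ∧ G₂.Adj iw.2 jw.2
    | _, _ => False

/-- The T-edge neighbourhood corona `G₁ ⊟_T G₂`: the disjoint union of the T-graph
`T(G₁)` (on `V₁ ⊕ E(G₁)`) and one copy of `G₂` for each edge of `G₁`, where every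
vertex of the `i`-th copy of `G₂` is joined to the two endpoints of the edge `eᵢ`
(as vertices of `G₁` inside `T(G₁)`). -/
def tEdgeCorona {V₁ V₂ : Type*} (G₁ : SimpleGraph V₁) (G₂ : SimpleGraph V₂) :
    SimpleGraph (V₁ ⊕ (G₁.edgeSet ⊕ G₁.edgeSet × V₂)) :=
  SimpleGraph.fromRel fun a b =>
    match a, b with
    | Sum.inl u, Sum.inl v => G₁.Adj u v
    | Sum.inl u, Sum.inr (Sum.inl e) => u ∈ (e : Sym2 V₁)
    | Sum.inl u, Sum.inr (Sum.inr ew) => u ∈ (ew.1 : Sym2 V₁)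
    | Sum.inr (Sum.inl e), Sum.inr (Sum.inl f) => ∃ v, v ∈ (e : Sym2 V₁) ∧ v ∈ (f : Sym2 V₁)
    | Sum.inr (Sum.inr ew), Sum.inr (Sum.inr fw) => ew.1 = fw.1 ∧ G₂.Adj ew.2 fw.2
    | _, _ => False

noncomputable instance {V₁ V₂ : Type*} (G₁ : SimpleGraph V₁) (G₂ : SimpleGraph V₂) :
    DecidableRel (tVertexCorona G₁ G₂).Adj := Classical.decRel _

noncomputable instance {V₁ V₂ : Type*} (G₁ : SimpleGraph V₁) (G₂ : SimpleGraph V₂) :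
    DecidableRel (tEdgeCorona G₁ G₂).Adj := Classical.decRel _

noncomputable instance {V : Type*} (G : SimpleGraph V) :
    DecidableRel (G.lineGraph).Adj := Classical.decRel _

/-!
Write `P_G` for the characteristic polynomial of `A(G)` and let `G₁` be `r`-regular with `n`
vertices, `m` edges and incidence matrix `R`. Order the vertices of `G₁ ⊟_T G₂` as
`V(G₁) ⊕ E(G₁) ⊕ (E(G₁) × V(G₂))`. The Schur complement of the block `x - I ⊗ A(G₂)` of the copies
of `G₂` contributes `P_{G₂}(x) ^ m` and changes the vertex block of `x - A(T(G₁))` into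
`x - A(G₁) - Γ_{G₂}(x) R Rᵀ`. Since `R Rᵀ = A(G₁) + r` and `Rᵀ R = A(L(G₁)) + 2`, eliminating the
edge block too (with Sylvester's identity between `det (t - Rᵀ R)` and `det (t - R Rᵀ)`) gives
`(x + 2) ^ n P_{G₁ ⊟_T G₂}(x) = P_{G₂}(x) ^ m (x + 2) ^ m det q(A(G₁))`, where the coefficients of
the polynomial `q` involve only `x`, `r` and `Γ_{G₂}(x)`.

The determinant of a polynomial in a matrix depends only on the characteristic polynomial of the
matrix (split the polynomial over an algebraic closure). A regular graph has the all-ones vector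
as an eigenvector, so its coronal is `n / (x - r)`, and its degree is its largest eigenvalue. Hence
cospectral regular graphs have the same order, degree, size and coronal. The two sides then agree
at every large `x`, and therefore as polynomials.
-/

open scoped Kronecker

namespace Matrix

theorem smul_one_sub_fromBlocks {K m n : Type*} [CommRing K] [DecidableEq m] [DecidableEq n]
    (A : Matrix m m K) (B : Matrix m n K) (C : Matrix n m K) (D : Matrix n n K) (x : K) :
    x • 1 - fromBlocks A B C D = fromBlocks (x • 1 - A) (-B) (-C) (x • 1 - D) := by
  rw [← fromBlocks_one, fromBlocks_smul, sub_eq_add_neg, fromBlocks_neg, fromBlocks_add]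
  simp [sub_eq_add_neg]

theorem submatrix_fst_mul_one_kronecker_mul_transpose {K m n p : Type*} [CommRing K]
    [Fintype n] [DecidableEq n] [Fintype p] (M : Matrix m n K) (N : Matrix p p K) :
    M.submatrix id (Prod.fst : n × p → n) * ((1 : Matrix n n K) ⊗ₖ N)
        * (M.submatrix id (Prod.fst : n × p → n))ᵀ = (∑ i, ∑ j, N i j) • (M * Mᵀ) := by
  ext u v
  simp only [Matrix.mul_apply, Fintype.sum_prod_type, kronecker_apply, one_apply,
    submatrix_apply, id, transpose_apply, smul_apply, smul_eq_mul, ite_mul, one_mul, zero_mul]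
  simp_rw [Finset.sum_comm (γ := n), mul_ite, mul_zero, Finset.sum_ite_eq', Finset.mem_univ,
    if_true, ← Finset.mul_sum]
  rw [Finset.sum_comm, Finset.mul_sum]
  refine Finset.sum_congr rfl fun j _ => ?_
  rw [← Finset.sum_mul, ← Finset.mul_sum, Finset.sum_comm (f := fun x y => N y x)]
  ring

theorem smul_one_sub_one_kronecker {K m n : Type*} [CommRing K] [DecidableEq m] [DecidableEq n]
    (x : K) (A : Matrix n n K) :
    x • (1 : Matrix (m × n) (m × n) K) - (1 : Matrix m m K) ⊗ₖ A
      = (1 : Matrix m m K) ⊗ₖ (x • 1 - A) := by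
  ext ⟨i, j⟩ ⟨i', j'⟩
  by_cases hi : i = i' <;> simp [one_apply, hi]

variable {K m n : Type*} [Fintype m] [DecidableEq m] [Fintype n] [DecidableEq n]

theorem eval_charpoly_eq_det_smul_one_sub [CommRing K] (A : Matrix n n K) (x : K) :
    A.charpoly.eval x = (x • 1 - A).det := by
  rw [eval_charpoly, scalar_apply, smul_one_eq_diagonal]

theorem card_eq_of_charpoly_eq [CommRing K] [Nontrivial K] {A : Matrix m m K} {B : Matrix n n K}
    (h : A.charpoly = B.charpoly) : Fintype.card m = Fintype.card n := by
  simpa only [charpoly_natDegree_eq_dim] using congrArg natDegree h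

theorem det_aeval_X_sub_C [CommRing K] (A : Matrix n n K) (a : K) :
    (aeval A (X - C a)).det = (-1) ^ Fintype.card n * A.charpoly.eval a := by
  rw [eval_charpoly_eq_det_smul_one_sub, ← det_neg, neg_sub, map_sub, aeval_X, aeval_C,
    Algebra.algebraMap_eq_smul_one]

theorem det_aeval_eq_of_charpoly_eq_of_isAlgClosed [Field K] [IsAlgClosed K]
    {A : Matrix m m K} {B : Matrix n n K} (h : A.charpoly = B.charpoly) (q : K[X]) :
    (aeval A q).det = (aeval B q).det := by
  change (detMonoidHom.comp (aeval A).toMonoidHom) q = (detMonoidHom.comp (aeval B).toMonoidHom) q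
  rw [(IsAlgClosed.splits q).eq_prod_roots, map_mul, map_mul, map_multiset_prod,
    map_multiset_prod, Multiset.map_map, Multiset.map_map]
  congr 1
  · simp [aeval_C, Algebra.algebraMap_eq_smul_one, card_eq_of_charpoly_eq h]
  · congr 1
    refine Multiset.map_congr rfl fun a _ => ?_
    change (aeval A (X - C a)).det = (aeval B (X - C a)).det
    rw [det_aeval_X_sub_C, det_aeval_X_sub_C, card_eq_of_charpoly_eq h, h]

theorem map_aeval_eq_aeval_map [CommRing K] {L : Type*} [CommRing L] [Algebra K L]
    (A : Matrix n n K) (q : K[X]) :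
    (aeval A q).map (algebraMap K L) = aeval (A.map (algebraMap K L)) (q.map (algebraMap K L)) := by
  rw [aeval_map_algebraMap]
  exact (aeval_algHom_apply (Algebra.ofId K L).mapMatrix A q).symm

theorem det_aeval_eq_of_charpoly_eq [Field K] {A : Matrix m m K} {B : Matrix n n K}
    (h : A.charpoly = B.charpoly) (q : K[X]) : (aeval A q).det = (aeval B q).det := by
  apply (algebraMap K (AlgebraicClosure K)).injective
  rw [RingHom.map_det, RingHom.map_det, RingHom.mapMatrix_apply, RingHom.mapMatrix_apply,
    map_aeval_eq_aeval_map, map_aeval_eq_aeval_map]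
  apply det_aeval_eq_of_charpoly_eq_of_isAlgClosed
  rw [charpoly_map, charpoly_map, h]

theorem det_smul_one_sub_mul_comm [CommRing K] (A : Matrix m n K) (B : Matrix n m K) (t : K) :
    t ^ Fintype.card n * (t • 1 - A * B).det = t ^ Fintype.card m * (t • 1 - B * A).det := by
  simpa only [eval_mul, eval_pow, eval_X, eval_charpoly_eq_det_smul_one_sub]
    using congrArg (eval t) (charpoly_mul_comm' A B)

theorem det_fromBlocks_neg_neg_transpose [Field K] (P : Matrix m m K) (R : Matrix m n K) (t : K)
    (hF : (t • 1 - R * Rᵀ).det ≠ 0) :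
    t ^ Fintype.card m * (fromBlocks P (-R) (-Rᵀ) (t • 1 - Rᵀ * R)).det
      = t ^ Fintype.card n * ((t • 1 - R * Rᵀ) * P - R * Rᵀ).det := by
  set F := t • 1 - R * Rᵀ
  set D := t • 1 - Rᵀ * R
  have hFR : F * R = R * D := by
    simp only [F, D, Matrix.sub_mul, Matrix.mul_sub, Matrix.smul_mul, Matrix.mul_smul,
      Matrix.one_mul, Matrix.mul_one, Matrix.mul_assoc]
  -- `F R = R D` is what makes the upper right block vanish
  have hmul : fromBlocks F R 0 1 * fromBlocks P (-R) (-Rᵀ) D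
      = fromBlocks (F * P - R * Rᵀ) 0 (-Rᵀ) D := by
    rw [fromBlocks_multiply]
    congr 1 <;> simp [hFR, sub_eq_add_neg]
  have hdet := congrArg det hmul
  rw [det_mul, det_fromBlocks_zero₂₁, det_one, mul_one, det_fromBlocks_zero₁₂] at hdet
  apply mul_left_cancel₀ hF
  calc F.det * (t ^ Fintype.card m * (fromBlocks P (-R) (-Rᵀ) D).det)
      = (F * P - R * Rᵀ).det * (t ^ Fintype.card m * D.det) := by
        rw [mul_left_comm, hdet, mul_left_comm]
    _ = F.det * (t ^ Fintype.card n * (F * P - R * Rᵀ).det) := by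
      rw [det_smul_one_sub_mul_comm Rᵀ R t]
      simp only [F]
      ring

theorem eval_charpoly_fromBlocks [Field K] (A : Matrix m m K) (B : Matrix m n K)
    (C : Matrix n m K) (D : Matrix n n K) (x : K) (hD : IsUnit (x • 1 - D).det) :
    (fromBlocks A B C D).charpoly.eval x
      = D.charpoly.eval x * (x • 1 - A - B * (x • 1 - D)⁻¹ * C).det := by
  have : Invertible (x • 1 - D) := invertibleOfIsUnitDet _ hD
  rw [eval_charpoly_eq_det_smul_one_sub, eval_charpoly_eq_det_smul_one_sub,
    smul_one_sub_fromBlocks, det_fromBlocks₂₂, invOf_eq_nonsing_inv]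
  simp only [Matrix.neg_mul, Matrix.mul_neg, neg_neg]

end Matrix

namespace SimpleGraph

theorem IsRegularOfDegree.two_mul_card_edgeSet {V : Type*} [Fintype V] {G : SimpleGraph V}
    [DecidableRel G.Adj] {d : ℕ} (hreg : G.IsRegularOfDegree d) :
    2 * Fintype.card G.edgeSet = Fintype.card V * d := by
  rw [← Set.toFinset_card, ← edgeFinset, ← sum_degrees_eq_twice_card_edges,
    sum_congr rfl fun v _ => hreg v, sum_const, card_univ, smul_eq_mul]

theorem IsRegularOfDegree.card_edgeSet_eq {V W : Type*} [Fintype V] [Fintype W]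
    {G : SimpleGraph V} {H : SimpleGraph W} [DecidableRel G.Adj] [DecidableRel H.Adj] {d : ℕ}
    (hG : G.IsRegularOfDegree d) (hH : H.IsRegularOfDegree d)
    (hcard : Fintype.card V = Fintype.card W) :
    Fintype.card G.edgeSet = Fintype.card H.edgeSet := by
  have h := hG.two_mul_card_edgeSet
  rw [hcard, ← hH.two_mul_card_edgeSet] at h
  omega

variable {V : Type*} [DecidableEq V] (G : SimpleGraph V) [DecidableRel G.Adj]

theorem incMat_apply_eq_incMatrix (v : V) (e : G.edgeSet) :
    incMat G v e = G.incMatrix ℝ v e := by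
  simp [incMat, incMatrix_apply', incidenceSet, e.2]

variable [Fintype V]

theorem incMat_mul_transpose :
    incMat G * (incMat G)ᵀ = G.adjMatrix ℝ + diagonal fun v => (G.degree v : ℝ) := by
  ext u v
  have hsum : (incMat G * (incMat G)ᵀ) u v = (G.incMatrix ℝ * (G.incMatrix ℝ)ᵀ) u v := by
    simp only [mul_apply, transpose_apply, incMat_apply_eq_incMatrix]
    rw [Finset.sum_set_coe (f := fun e => G.incMatrix ℝ u e * G.incMatrix ℝ v e)]
    refine Finset.sum_subset (subset_univ _) fun e _ he => ?_
    simp_all [incMatrix_apply', incidenceSet]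
  rw [hsum, incMatrix_mul_transpose]
  by_cases huv : u = v
  · simp [huv]
  · simp [huv, adjMatrix_apply]

theorem transpose_incMat_mul_incMat :
    (incMat G)ᵀ * incMat G = G.lineGraph.adjMatrix ℝ + (2 : ℝ) • 1 := by
  ext e f
  by_cases hef : e = f
  · subst hef
    have h := G.incMatrix_transpose_mul_diag (R := ℝ) (e := e)
    simp only [mul_apply, transpose_apply, incMat_apply_eq_incMatrix, e.2, if_true] at h ⊢
    simp [h, adjMatrix_apply]
  have hcommon : (univ.filter fun v => v ∈ (e : Sym2 V) ∧ v ∈ (f : Sym2 V)).card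
      = if ∃ v, v ∈ (e : Sym2 V) ∧ v ∈ (f : Sym2 V) then 1 else 0 := by
    split_ifs with h
    · obtain ⟨v, hv⟩ := h
      refine card_eq_one.2 ⟨v, eq_singleton_iff_unique_mem.2 ⟨by simpa using hv, ?_⟩⟩
      -- two distinct common vertices would determine both edges
      intro w hw
      by_contra hwv
      simp only [mem_filter, mem_univ, true_and] at hw
      exact hef (Subtype.ext (((Sym2.mem_and_mem_iff hwv).1 ⟨hw.1, hv.1⟩).trans
        ((Sym2.mem_and_mem_iff hwv).1 ⟨hw.2, hv.2⟩).symm))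
    · simpa using h
  simp only [mul_apply, transpose_apply, incMat, of_apply, mul_boole, ← ite_and, and_comm,
    sum_boole, Matrix.add_apply, Matrix.smul_apply, one_apply_ne hef, adjMatrix_apply,
    lineGraph_adj_iff_exists, hcommon]
  split_ifs <;> simp_all

variable {G} {d : ℕ}

theorem IsRegularOfDegree.det_smul_one_sub_adjMatrix_ne_zero (hreg : G.IsRegularOfDegree d)
    {x : ℝ} (hx : (d : ℝ) < x) : (x • 1 - G.adjMatrix ℝ).det ≠ 0 := by
  apply det_ne_zero_of_sum_row_lt_diag
  intro k
  have hoff : ∀ j ∈ univ.erase k, ‖(x • 1 - G.adjMatrix ℝ) k j‖ = G.adjMatrix ℝ k j := by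
    intro j hj
    rw [Matrix.sub_apply, Matrix.smul_apply, one_apply_ne (ne_of_mem_erase hj).symm]
    by_cases h : G.Adj k j <;> simp [h]
  have hrow : ∑ j, G.adjMatrix ℝ k j = d := by
    simpa [mulVec, dotProduct, hreg k] using
      G.adjMatrix_mulVec_const_apply (α := ℝ) (a := 1) (v := k)
  rw [sum_congr rfl hoff, sum_erase _ (by simp), hrow]
  simpa [abs_of_pos ((Nat.cast_nonneg d).trans_lt hx)] using hx

theorem IsRegularOfDegree.eval_charpoly_adjMatrix [Nonempty V] (hreg : G.IsRegularOfDegree d) :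
    (G.adjMatrix ℝ).charpoly.eval (d : ℝ) = 0 := by
  rw [eval_charpoly, ← exists_mulVec_eq_zero_iff]
  refine ⟨fun _ => 1, fun h => one_ne_zero (congrFun h (Classical.arbitrary V)), ?_⟩
  ext v
  simp [sub_mulVec, hreg v]

theorem IsRegularOfDegree.coronal_adjMatrix (hreg : G.IsRegularOfDegree d) {x : ℝ}
    (hx : (d : ℝ) < x) : coronal (G.adjMatrix ℝ) x = Fintype.card V / (x - d) := by
  set T := x • 1 - G.adjMatrix ℝ
  have hT : IsUnit T.det := isUnit_iff_ne_zero.2 (hreg.det_smul_one_sub_adjMatrix_ne_zero hx)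
  have hone : T *ᵥ (fun _ => 1) = fun _ => x - d := by
    ext v
    simp [T, sub_mulVec, smul_mulVec, hreg v]
  have hrow : ∀ i, ∑ j, T⁻¹ i j = (x - d)⁻¹ := by
    intro i
    have h := congrFun (congrArg (T⁻¹ *ᵥ ·) hone) i
    rw [mulVec_mulVec, nonsing_inv_mul _ hT, one_mulVec] at h
    simp only [mulVec, dotProduct, ← sum_mul] at h
    exact eq_inv_of_mul_eq_one_left h.symm
  simp [coronal, T, hrow, div_eq_mul_inv]

theorem IsRegularOfDegree.le_of_charpoly_eq [Nonempty V] {W : Type*} [Fintype W] [DecidableEq W]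
    {H : SimpleGraph W} [DecidableRel H.Adj] {d' : ℕ} (hG : G.IsRegularOfDegree d)
    (hH : H.IsRegularOfDegree d') (hcos : (G.adjMatrix ℝ).charpoly = (H.adjMatrix ℝ).charpoly) :
    d ≤ d' := by
  by_contra hlt
  have h := hH.det_smul_one_sub_adjMatrix_ne_zero (x := d) (by exact_mod_cast not_le.1 hlt)
  rw [← eval_charpoly_eq_det_smul_one_sub, ← hcos, hG.eval_charpoly_adjMatrix] at h
  exact h rfl

theorem IsRegularOfDegree.of_charpoly_eq {W : Type*} [Fintype W] [DecidableEq W]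
    {H : SimpleGraph W} [DecidableRel H.Adj] {d' : ℕ} (hG : G.IsRegularOfDegree d)
    (hH : H.IsRegularOfDegree d') (hcos : (G.adjMatrix ℝ).charpoly = (H.adjMatrix ℝ).charpoly) :
    G.IsRegularOfDegree d' := by
  rcases isEmpty_or_nonempty V with hV | hV
  · exact .of_isEmpty
  have : Nonempty W := Fintype.card_pos_iff.1 (card_eq_of_charpoly_eq hcos ▸ Fintype.card_pos)
  rwa [← le_antisymm (hG.le_of_charpoly_eq hH hcos) (hH.le_of_charpoly_eq hG hcos.symm)]

end SimpleGraph

section TEdgeCorona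

variable {V₁ V₂ : Type*} (G₁ : SimpleGraph V₁) (G₂ : SimpleGraph V₂)

theorem tEdgeCorona_adj_vertex_vertex {u v : V₁} :
    (tEdgeCorona G₁ G₂).Adj (.inl u) (.inl v) ↔ G₁.Adj u v := by
  simpa [tEdgeCorona, G₁.adj_comm] using G₁.ne_of_adj

theorem tEdgeCorona_adj_edge_edge {e f : G₁.edgeSet} :
    (tEdgeCorona G₁ G₂).Adj (.inr (.inl e)) (.inr (.inl f)) ↔ G₁.lineGraph.Adj e f := by
  simp only [tEdgeCorona, SimpleGraph.fromRel_adj, SimpleGraph.lineGraph_adj_iff_exists, ne_eq,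
    Sum.inr.injEq, Sum.inl.injEq]
  grind

theorem tEdgeCorona_adj_copy_copy {e f : G₁.edgeSet} {w w' : V₂} :
    (tEdgeCorona G₁ G₂).Adj (.inr (.inr (e, w))) (.inr (.inr (f, w'))) ↔
      e = f ∧ G₂.Adj w w' := by
  simp only [tEdgeCorona, SimpleGraph.fromRel_adj, ne_eq, Sum.inr.injEq, Prod.mk.injEq]
  grind [G₂.adj_comm, G₂.ne_of_adj]

variable [DecidableEq V₁] [DecidableRel G₁.Adj] [DecidableRel G₂.Adj]

theorem reindex_adjMatrix_tEdgeCorona :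
    reindex (Equiv.sumAssoc _ _ _).symm (Equiv.sumAssoc _ _ _).symm
        ((tEdgeCorona G₁ G₂).adjMatrix ℝ)
      = fromBlocks
          (fromBlocks (G₁.adjMatrix ℝ) (incMat G₁) (incMat G₁)ᵀ (G₁.lineGraph.adjMatrix ℝ))
          (fromRows ((incMat G₁).submatrix id (Prod.fst : G₁.edgeSet × V₂ → G₁.edgeSet)) 0)
          (fromRows ((incMat G₁).submatrix id (Prod.fst : G₁.edgeSet × V₂ → G₁.edgeSet)) 0)ᵀ
          ((1 : Matrix G₁.edgeSet G₁.edgeSet ℝ) ⊗ₖ G₂.adjMatrix ℝ) := by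
  ext ((u | e) | ⟨e, w⟩) ((v | f) | ⟨f, w'⟩) <;>
    simp only [reindex_apply, Equiv.symm_symm, submatrix_apply, SimpleGraph.adjMatrix_apply,
      Equiv.sumAssoc_apply_inl_inl, Equiv.sumAssoc_apply_inl_inr, Equiv.sumAssoc_apply_inr,
      tEdgeCorona_adj_vertex_vertex, tEdgeCorona_adj_edge_edge, tEdgeCorona_adj_copy_copy] <;>
    simp [tEdgeCorona, incMat, one_apply, ← ite_and, and_comm]

variable [DecidableEq V₂] [Fintype V₁] [Fintype V₂]

theorem eval_charpoly_tEdgeCorona_eq_det {x : ℝ} (hT : (x • 1 - G₂.adjMatrix ℝ).det ≠ 0) :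
    ((tEdgeCorona G₁ G₂).adjMatrix ℝ).charpoly.eval x
      = (G₂.adjMatrix ℝ).charpoly.eval x ^ Fintype.card G₁.edgeSet
        * (fromBlocks
            (x • 1 - G₁.adjMatrix ℝ - coronal (G₂.adjMatrix ℝ) x • (incMat G₁ * (incMat G₁)ᵀ))
            (-incMat G₁) (-(incMat G₁)ᵀ) ((x + 2) • 1 - (incMat G₁)ᵀ * incMat G₁)).det := by
  set A₂ := G₂.adjMatrix ℝ
  set R := incMat G₁
  set B := fromRows (R.submatrix id Prod.fst) (0 : Matrix G₁.edgeSet (G₁.edgeSet × V₂) ℝ)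
  have hK : IsUnit (x • 1 - (1 : Matrix G₁.edgeSet G₁.edgeSet ℝ) ⊗ₖ A₂).det := by
    rw [smul_one_sub_one_kronecker, det_kronecker, det_one, one_pow, one_mul]
    exact (isUnit_iff_ne_zero.2 hT).pow _
  have hcopies : ((1 : Matrix G₁.edgeSet G₁.edgeSet ℝ) ⊗ₖ A₂).charpoly.eval x
      = A₂.charpoly.eval x ^ Fintype.card G₁.edgeSet := by
    rw [eval_charpoly_eq_det_smul_one_sub, eval_charpoly_eq_det_smul_one_sub,
      smul_one_sub_one_kronecker, det_kronecker, det_one, one_pow, one_mul]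
  have hschur : B * (x • 1 - (1 : Matrix G₁.edgeSet G₁.edgeSet ℝ) ⊗ₖ A₂)⁻¹ * Bᵀ
      = fromBlocks (coronal A₂ x • (R * Rᵀ)) 0 0 0 := by
    rw [smul_one_sub_one_kronecker, inv_kronecker, inv_one, fromRows_mul, transpose_fromRows,
      fromRows_mul_fromCols, submatrix_fst_mul_one_kronecker_mul_transpose]
    simp [coronal]
  rw [← charpoly_reindex (Equiv.sumAssoc _ _ _).symm, reindex_adjMatrix_tEdgeCorona,
    eval_charpoly_fromBlocks _ _ _ _ x hK, hcopies, hschur, SimpleGraph.transpose_incMat_mul_incMat]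
  congr 2
  ext (i | i) (j | j) <;> simp [R, one_apply, add_smul]

/-- `(t - R Rᵀ) P - R Rᵀ` from `Matrix.det_fromBlocks_neg_neg_transpose`, written as a polynomial in
`A(G₁)` through `R Rᵀ = A(G₁) + r`, with `t = x + 2` and `P = x - A(G₁) - Γ R Rᵀ`. -/
noncomputable def tEdgeCoronaPoly (r x Γ : ℝ) : ℝ[X] :=
  (C (x + 2 - r) - X) * (C x - X - C Γ * (X + C r)) - (X + C r)

theorem eval_charpoly_tEdgeCorona {r : ℕ} (hreg : G₁.IsRegularOfDegree r) {x : ℝ}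
    (hT : (x • 1 - G₂.adjMatrix ℝ).det ≠ 0) (hF : ((x + 2 - r) • 1 - G₁.adjMatrix ℝ).det ≠ 0) :
    (x + 2) ^ Fintype.card V₁ * ((tEdgeCorona G₁ G₂).adjMatrix ℝ).charpoly.eval x
      = (G₂.adjMatrix ℝ).charpoly.eval x ^ Fintype.card G₁.edgeSet
        * (x + 2) ^ Fintype.card G₁.edgeSet
        * (aeval (G₁.adjMatrix ℝ) (tEdgeCoronaPoly r x (coronal (G₂.adjMatrix ℝ) x))).det := by
  set A₁ := G₁.adjMatrix ℝ
  set R := incMat G₁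
  set Γ := coronal (G₂.adjMatrix ℝ) x
  have hRR : R * Rᵀ = A₁ + (r : ℝ) • 1 := by
    rw [SimpleGraph.incMat_mul_transpose, smul_one_eq_diagonal]
    simp only [hreg.degree_eq]
    rfl
  have hF' : ((x + 2) • 1 - R * Rᵀ).det ≠ 0 := by
    rwa [hRR, show (x + 2) • 1 - (A₁ + (r : ℝ) • 1) = (x + 2 - r) • 1 - A₁ by
      rw [sub_smul]; abel]
  have hq : aeval A₁ (tEdgeCoronaPoly r x Γ)
      = ((x + 2) • 1 - R * Rᵀ) * (x • 1 - A₁ - Γ • (R * Rᵀ)) - R * Rᵀ := by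
    simp only [tEdgeCoronaPoly, map_sub, map_mul, map_add, aeval_X, aeval_C,
      Algebra.algebraMap_eq_smul_one, hRR, smul_one_mul, add_smul]
    congr 2
    abel
  rw [eval_charpoly_tEdgeCorona_eq_det G₁ G₂ hT, hq, mul_left_comm,
    det_fromBlocks_neg_neg_transpose _ _ _ hF']
  ring

end TEdgeCorona

theorem Polynomial.eq_of_forall_gt_eval_eq {p q : ℝ[X]} (B : ℝ)
    (h : ∀ x, B < x → p.eval x = q.eval x) : p = q :=
  eq_of_infinite_eval_eq p q ((Set.Ioi_infinite B).mono h)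

/-- If `H₁` and `H₂` are A-cospectral regular graphs and `H` is a regular graph, then
`H₁ ⊟_T H` and `H₂ ⊟_T H` are A-cospectral, and `H ⊟_T H₁` and `H ⊟_T H₂` are
A-cospectral. -/
theorem tEdgeCorona_A_cospectral {U₁ U₂ W : Type*}
    [Fintype U₁] [DecidableEq U₁] [Fintype U₂] [DecidableEq U₂] [Fintype W] [DecidableEq W]
    (H₁ : SimpleGraph U₁) (H₂ : SimpleGraph U₂) (H : SimpleGraph W)
    [DecidableRel H₁.Adj] [DecidableRel H₂.Adj] [DecidableRel H.Adj]
    (d₁ d₂ d : ℕ) (hreg₁ : H₁.IsRegularOfDegree d₁) (hreg₂ : H₂.IsRegularOfDegree d₂)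
    (hreg : H.IsRegularOfDegree d)
    (hcos : (H₁.adjMatrix ℝ).charpoly = (H₂.adjMatrix ℝ).charpoly) :
    ((tEdgeCorona H₁ H).adjMatrix ℝ).charpoly = ((tEdgeCorona H₂ H).adjMatrix ℝ).charpoly ∧
    ((tEdgeCorona H H₁).adjMatrix ℝ).charpoly = ((tEdgeCorona H H₂).adjMatrix ℝ).charpoly := by
  have hcard := card_eq_of_charpoly_eq hcos
  have hreg₁' : H₁.IsRegularOfDegree d₂ := hreg₁.of_charpoly_eq hreg₂ hcos
  have hedges := hreg₁'.card_edgeSet_eq hreg₂ hcard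
  have hlarge {x : ℝ} (hx : 2 * (d₂ + d : ℝ) < x) :
      (d₂ : ℝ) < x ∧ (d : ℝ) < x ∧ (d₂ : ℝ) < x + 2 - d₂ ∧ (d : ℝ) < x + 2 - d ∧ x + 2 ≠ 0 := by
    have : (0 : ℝ) ≤ d₂ := d₂.cast_nonneg
    have : (0 : ℝ) ≤ d := d.cast_nonneg
    exact ⟨by linarith, by linarith, by linarith, by linarith, by linarith⟩
  constructor
  · refine Polynomial.eq_of_forall_gt_eval_eq (2 * (d₂ + d)) fun x hx => ?_
    obtain ⟨-, hd, hd₂', -, hx2⟩ := hlarge hx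
    apply mul_left_cancel₀ (pow_ne_zero (Fintype.card U₁) hx2)
    rw [eval_charpoly_tEdgeCorona H₁ H hreg₁' (hreg.det_smul_one_sub_adjMatrix_ne_zero hd)
        (hreg₁'.det_smul_one_sub_adjMatrix_ne_zero hd₂'), hcard,
      eval_charpoly_tEdgeCorona H₂ H hreg₂ (hreg.det_smul_one_sub_adjMatrix_ne_zero hd)
        (hreg₂.det_smul_one_sub_adjMatrix_ne_zero hd₂'), hedges, det_aeval_eq_of_charpoly_eq hcos]
  · refine Polynomial.eq_of_forall_gt_eval_eq (2 * (d₂ + d)) fun x hx => ?_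
    obtain ⟨hd₂, -, -, hd', hx2⟩ := hlarge hx
    apply mul_left_cancel₀ (pow_ne_zero (Fintype.card W) hx2)
    rw [eval_charpoly_tEdgeCorona H H₁ hreg (hreg₁'.det_smul_one_sub_adjMatrix_ne_zero hd₂)
        (hreg.det_smul_one_sub_adjMatrix_ne_zero hd'),
      eval_charpoly_tEdgeCorona H H₂ hreg (hreg₂.det_smul_one_sub_adjMatrix_ne_zero hd₂)
        (hreg.det_smul_one_sub_adjMatrix_ne_zero hd'), hcos, hreg₁'.coronal_adjMatrix hd₂,
      hreg₂.coronal_adjMatrix hd₂, hcard]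
end

section
/- Let G_1 be an r_1-regular graph with m_1 edges and let G_2 be an r_2-regular graph with n_2 vertices. Then for every nonzero real number μ that is a Laplacian eigenvalue of G_2 with multiplicity k, the number 2 + μ is a Laplacian eigenvalue of the T-edge neighbourhood corona G_1 ⊟_T G_2 with multiplicity at least m_1·k. -/
open Finset Matrix Polynomial

/-!
On the copy of `G₂` attached to an edge `e = uv`, put a Laplacian eigenvector `x` of `G₂` for
`μ ≠ 0`, and put `0` everywhere else. Every vertex of that copy has the two extra neighbours
`u, v`, where the vector vanishes, so the Laplacian of the corona acts there as `2 + L(G₂)`.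
At `u` and `v` the Laplacian picks up `-∑ x = 0`, since `x` is orthogonal to the all-ones
kernel vector of `L(G₂)`; all other rows vanish. Doing this independently on each of the
`m₁` copies embeds `m₁` copies of the `μ`-eigenspace of `L(G₂)` into the `(2 + μ)`-eigenspace of
the corona. As `L(G₂)` is symmetric its `μ`-eigenspace has dimension the algebraic multiplicity
`k`, and geometric multiplicity never exceeds algebraic multiplicity.
-/

open Module

theorem Matrix.IsHermitian.finrank_eigenspace_toEuclideanLin {𝕜 n : Type*} [RCLike 𝕜]
    [Fintype n] [DecidableEq n] {A : Matrix n n 𝕜} (hA : A.IsHermitian) (μ : 𝕜) :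
    finrank 𝕜 (End.eigenspace (toEuclideanLin A) μ) = A.charpoly.rootMultiplicity μ := by
  have hss := (isSymmetric_toEuclideanLin_iff.mpr hA).isFinitelySemisimple
  rw [← hss.maxGenEigenspace_eq_eigenspace, LinearMap.finrank_maxGenEigenspace_eq,
    toEuclideanLin_eq_toLin_orthonormal, charpoly_toLin]

theorem Matrix.finrank_eigenspace_toEuclideanLin_le {𝕜 n : Type*} [RCLike 𝕜]
    [Fintype n] [DecidableEq n] (A : Matrix n n 𝕜) (μ : 𝕜) :
    finrank 𝕜 (End.eigenspace (toEuclideanLin A) μ) ≤ A.charpoly.rootMultiplicity μ := by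
  simpa [toEuclideanLin_eq_toLin_orthonormal] using
    LinearMap.finrank_eigenspace_le (toEuclideanLin A) μ

theorem Matrix.mem_eigenspace_toEuclideanLin_iff {𝕜 n : Type*} [RCLike 𝕜] [Fintype n]
    [DecidableEq n] {A : Matrix n n 𝕜} {μ : 𝕜} {x : EuclideanSpace 𝕜 n} :
    x ∈ End.eigenspace (toEuclideanLin A) μ ↔ A *ᵥ x.ofLp = μ • x.ofLp := by
  rw [End.mem_eigenspace_iff, toLpLin_apply, ← (WithLp.ofLp_injective 2).eq_iff]
  rfl

theorem SimpleGraph.lapMatrix_mulVec_apply_eq_sum_adj {V R : Type*} [Fintype V]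
    [DecidableEq V] [NonAssocRing R] (G : SimpleGraph V) [DecidableRel G.Adj] (x : V → R) (v : V) :
    (G.lapMatrix R *ᵥ x) v = ∑ u, if G.Adj v u then x v - x u else 0 := by
  rw [lapMatrix_mulVec_apply, ← Finset.sum_filter, ← neighborFinset_eq_filter,
    Finset.sum_sub_distrib, Finset.sum_const, card_neighborFinset_eq_degree, nsmul_eq_mul]

theorem SimpleGraph.sum_eq_zero_of_lapMatrix_mulVec_eq_smul {V : Type*} [Fintype V]
    [DecidableEq V] (G : SimpleGraph V) [DecidableRel G.Adj] {μ : ℝ} (hμ : μ ≠ 0) {x : V → ℝ}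
    (hx : G.lapMatrix ℝ *ᵥ x = μ • x) : ∑ v, x v = 0 := by
  have h : (fun _ ↦ (1 : ℝ)) ⬝ᵥ (G.lapMatrix ℝ *ᵥ x) = 0 := by
    rw [dotProduct_mulVec, ← mulVec_transpose, (G.isSymm_lapMatrix ℝ).eq,
      lapMatrix_mulVec_const_eq_zero, zero_dotProduct]
  rw [hx, dotProduct_smul, smul_eq_zero] at h
  simpa [dotProduct] using h.resolve_left hμ

theorem Sym2.sum_ite_mem_of_not_isDiag {V M : Type*} [Fintype V] [DecidableEq V]
    [AddCommMonoid M] {e : Sym2 V} (he : ¬ e.IsDiag) (c : M) :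
    ∑ v, (if v ∈ e then c else 0) = 2 • c := by
  rw [← Finset.sum_filter, Finset.sum_const]
  congr
  rw [← Sym2.card_toFinset_of_not_isDiag e he]
  congr 1
  ext v
  simp

section tEdgeCorona

variable {V₁ V₂ : Type*} {G₁ : SimpleGraph V₁} {G₂ : SimpleGraph V₂}

@[simp]
theorem tEdgeCorona_adj_inl_copy {u : V₁} {p : G₁.edgeSet × V₂} :
    (tEdgeCorona G₁ G₂).Adj (Sum.inl u) (Sum.inr (Sum.inr p)) ↔ u ∈ (p.1 : Sym2 V₁) := by
  simp [tEdgeCorona]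

@[simp]
theorem tEdgeCorona_adj_copy_inl {u : V₁} {p : G₁.edgeSet × V₂} :
    (tEdgeCorona G₁ G₂).Adj (Sum.inr (Sum.inr p)) (Sum.inl u) ↔ u ∈ (p.1 : Sym2 V₁) := by
  rw [SimpleGraph.adj_comm, tEdgeCorona_adj_inl_copy]

@[simp]
theorem tEdgeCorona_not_adj_edge_copy {f : G₁.edgeSet} {p : G₁.edgeSet × V₂} :
    ¬ (tEdgeCorona G₁ G₂).Adj (Sum.inr (Sum.inl f)) (Sum.inr (Sum.inr p)) := by
  simp [tEdgeCorona]

@[simp]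
theorem tEdgeCorona_not_adj_copy_edge {f : G₁.edgeSet} {p : G₁.edgeSet × V₂} :
    ¬ (tEdgeCorona G₁ G₂).Adj (Sum.inr (Sum.inr p)) (Sum.inr (Sum.inl f)) :=
  fun h ↦ tEdgeCorona_not_adj_edge_copy h.symm

@[simp]
theorem tEdgeCorona_adj_copy_copy_s13 {p q : G₁.edgeSet × V₂} :
    (tEdgeCorona G₁ G₂).Adj (Sum.inr (Sum.inr p)) (Sum.inr (Sum.inr q)) ↔
      p.1 = q.1 ∧ G₂.Adj p.2 q.2 := by
  simp only [tEdgeCorona, SimpleGraph.fromRel_adj]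
  constructor
  · rintro ⟨-, h | ⟨h₁, h₂⟩⟩
    · exact h
    · exact ⟨h₁.symm, h₂.symm⟩
  · rintro ⟨h₁, h₂⟩
    exact ⟨fun h ↦ h₂.ne (congrArg Prod.snd (Sum.inr_injective (Sum.inr_injective h))),
      Or.inl ⟨h₁, h₂⟩⟩

def copiesVec (G₁ : SimpleGraph V₁) (z : G₁.edgeSet → V₂ → ℝ) :
    V₁ ⊕ (G₁.edgeSet ⊕ G₁.edgeSet × V₂) → ℝ :=
  Sum.elim 0 (Sum.elim 0 fun p ↦ z p.1 p.2)

variable (G₁) in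
def copiesLift : (G₁.edgeSet → EuclideanSpace ℝ V₂) →ₗ[ℝ]
    EuclideanSpace ℝ (V₁ ⊕ (G₁.edgeSet ⊕ G₁.edgeSet × V₂)) where
  toFun z := WithLp.toLp 2 (copiesVec G₁ fun e ↦ (z e).ofLp)
  map_add' z z' := by ext (u | f | p) <;> simp [copiesVec]
  map_smul' c z := by ext (u | f | p) <;> simp [copiesVec]

theorem copiesLift_injective : Function.Injective (copiesLift G₁ (V₂ := V₂)) := by
  refine (injective_iff_map_eq_zero _).mpr fun z hz ↦ ?_
  ext e w
  simpa [copiesLift, copiesVec] using congrArg (· (Sum.inr (Sum.inr (e, w)))) hz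

variable [Fintype V₁] [DecidableEq V₁] [Fintype V₂] [DecidableEq V₂]
  [DecidableRel G₁.Adj] [DecidableRel G₂.Adj]

theorem tEdgeCorona_lapMatrix_mulVec_copiesVec {μ : ℝ} {z : G₁.edgeSet → V₂ → ℝ}
    (hz : ∀ e, G₂.lapMatrix ℝ *ᵥ z e = μ • z e) (hsum : ∀ e, ∑ w, z e w = 0) :
    (tEdgeCorona G₁ G₂).lapMatrix ℝ *ᵥ copiesVec G₁ z = (2 + μ) • copiesVec G₁ z := by
  ext a
  rw [SimpleGraph.lapMatrix_mulVec_apply_eq_sum_adj]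
  simp only [Fintype.sum_sum_type, Fintype.sum_prod_type]
  rcases a with u | f | ⟨e, w⟩
  · simp [copiesVec, hsum]
  · simp [copiesVec]
  · have hw := congrFun (hz e) w
    rw [SimpleGraph.lapMatrix_mulVec_apply_eq_sum_adj] at hw
    simp [copiesVec, ite_and, Finset.sum_ite_irrel, hw, add_mul,
      Sym2.sum_ite_mem_of_not_isDiag (G₁.not_isDiag_of_mem_edgeSet e.2)]

theorem card_edgeSet_mul_finrank_eigenspace_le_tEdgeCorona {μ : ℝ} (hμ : μ ≠ 0) :
    Fintype.card G₁.edgeSet * finrank ℝ (End.eigenspace (toEuclideanLin (G₂.lapMatrix ℝ)) μ) ≤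
      finrank ℝ (End.eigenspace (toEuclideanLin ((tEdgeCorona G₁ G₂).lapMatrix ℝ)) (2 + μ)) := by
  set W := End.eigenspace (toEuclideanLin (G₂.lapMatrix ℝ)) μ
  have hmaps : ∀ z : G₁.edgeSet → W, copiesLift G₁ (fun e ↦ (z e : EuclideanSpace ℝ V₂)) ∈
      End.eigenspace (toEuclideanLin ((tEdgeCorona G₁ G₂).lapMatrix ℝ)) (2 + μ) := by
    intro z
    have hz e : G₂.lapMatrix ℝ *ᵥ (z e : EuclideanSpace ℝ V₂).ofLp =
        μ • (z e : EuclideanSpace ℝ V₂).ofLp :=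
      mem_eigenspace_toEuclideanLin_iff.mp (z e).2
    exact mem_eigenspace_toEuclideanLin_iff.mpr <| tEdgeCorona_lapMatrix_mulVec_copiesVec hz
      fun e ↦ G₂.sum_eq_zero_of_lapMatrix_mulVec_eq_smul hμ (hz e)
  let Φ := (copiesLift G₁ ∘ₗ W.subtype.compLeft G₁.edgeSet).codRestrict _ hmaps
  have hΦ : Function.Injective Φ := fun z z' h ↦
    funext fun e ↦ Subtype.ext (congrFun (copiesLift_injective (Subtype.ext_iff.mp h)) e)
  calc Fintype.card G₁.edgeSet * finrank ℝ W = finrank ℝ (G₁.edgeSet → W) := by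
        rw [finrank_pi_fintype, Finset.sum_const, Finset.card_univ, smul_eq_mul]
    _ ≤ _ := LinearMap.finrank_le_finrank_of_injective hΦ

end tEdgeCorona

theorem lap_eigenvalue_mult_tEdgeCorona_general {V₁ V₂ : Type*} [Fintype V₁] [DecidableEq V₁]
    [Fintype V₂] [DecidableEq V₂]
    (G₁ : SimpleGraph V₁) (G₂ : SimpleGraph V₂)
    [DecidableRel G₁.Adj] [DecidableRel G₂.Adj]
    (mu : ℝ) (hmu : mu ≠ 0) (k : ℕ)
    (hmult : ((G₂.lapMatrix ℝ).charpoly).rootMultiplicity mu = k) :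
    Fintype.card G₁.edgeSet * k ≤
      (((tEdgeCorona G₁ G₂).lapMatrix ℝ).charpoly).rootMultiplicity (2 + mu) := by
  rw [← hmult, ← (G₂.isHermitian_lapMatrix ℝ).finrank_eigenspace_toEuclideanLin]
  exact (card_edgeSet_mul_finrank_eigenspace_le_tEdgeCorona hmu).trans
    (finrank_eigenspace_toEuclideanLin_le _ _)

/-- For every nonzero Laplacian eigenvalue `mu` of the `r₂`-regular graph `G₂`, of
multiplicity `k`, the number `2 + mu` is a Laplacian eigenvalue of the T-edge
neighbourhood corona `G₁ ⊟_T G₂` with multiplicity at least `m₁ · k`. -/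
theorem lap_eigenvalue_mult_tEdgeCorona {V₁ V₂ : Type*} [Fintype V₁] [DecidableEq V₁]
    [Fintype V₂] [DecidableEq V₂]
    (G₁ : SimpleGraph V₁) (G₂ : SimpleGraph V₂)
    [DecidableRel G₁.Adj] [DecidableRel G₂.Adj]
    (r₁ r₂ : ℕ) (hreg₁ : G₁.IsRegularOfDegree r₁) (hreg₂ : G₂.IsRegularOfDegree r₂)
    (mu : ℝ) (hmu : mu ≠ 0) (k : ℕ) (hk : 0 < k)
    (hmult : ((G₂.lapMatrix ℝ).charpoly).rootMultiplicity mu = k) :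
    Fintype.card G₁.edgeSet * k ≤
      (((tEdgeCorona G₁ G₂).lapMatrix ℝ).charpoly).rootMultiplicity (2 + mu) :=
  lap_eigenvalue_mult_tEdgeCorona_general G₁ G₂ mu hmu k hmult
end
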